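/- Let S₁, S₂ : ℂ^X → ℂ^X be invertible linear operators, W₁, W₂ : X³ → ℂ, and set 𝒲_j(φ₁,φ₂)(x) = Σ_{y,z∈X} W_j(x,y,z)φ₁(y)φ₂(z). Let κ > 0 and K > 0, set S̄ = max{‖S₁‖_G, ‖S₂‖_G} and W̄ = max{‖W₁‖_G, ‖W₂‖_G}, and assume S̄²·W̄·κ < 1/(2K). Let α₁, α₂ ∈ ℂ^X and suppose (φ₁,φ₂) and (φ₁',φ₂') are two pairs of fields satisfying S₁^{-1}φ₁ + 𝒲₁(φ₁,φ₂) = α₁ and S₂^{-1}φ₂ + 𝒲₂(φ₁,φ₂) = α₂ (and likewise for the primed pair), with max_{x∈X}|(S_j^{-1}φ_j)(x)| ≤ Kκ and max_{x∈X}|(S_j^{-1}φ_j')(x)| ≤ Kκ for j = 1,2. Then φ₁ = φ₁' and φ₂ = φ₂'. -/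

import Mathlib

open scoped BigOperators ENNReal Classical

namespace BFKT

noncomputable section

variable {X : Type*}

/-- Tuples of points of `X` with prescribed multi-length `n`. -/
abbrev Tup (X : Type*) {s : ℕ} (n : Fin s → ℕ) := (j : Fin s) → Fin (n j) → X

/-- Pass from a tuple to the associated family of lists. -/
def toLists {s : ℕ} {n : Fin s → ℕ} (v : Tup X n) : Fin s → List X :=
  fun j => List.ofFn (v j)

/-- The set of points of `X` occurring in one of the lists. -/
def supp [DecidableEq X] {s : ℕ} (l : Fin s → List X) : Finset X :=
  Finset.univ.biUnion fun j => (l j).toFinset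

/-- The weight system with tree-weight `G` and constant weight factors `κ`. -/
def wt [DecidableEq X] (G : Finset X → ℝ) {s : ℕ} (κ : Fin s → ℝ) (l : Fin s → List X) : ℝ :=
  (∏ j, κ j ^ (l j).length) * G (supp l)

/-- A coefficient system is symmetric if it is invariant under permutation of the
components of each of its list arguments. -/
def IsSymm {s : ℕ} (a : (Fin s → List X) → ℂ) : Prop :=
  ∀ (l : Fin s → List X) (j : Fin s) (l' : List X),
    (l j).Perm l' → a (Function.update l j l') = a l

/-- The norm `‖f‖_w` of an analytic function with (symmetric) coefficient system `a`. -/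
def coefNorm [Fintype X] [DecidableEq X] (G : Finset X → ℝ) {s : ℕ}
    (κ : Fin s → ℝ) (a : (Fin s → List X) → ℂ) : ℝ≥0∞ :=
  ENNReal.ofReal (norm (a fun _ => [])) +
  ∑' n : Fin s → ℕ,
    if 1 ≤ ∑ j, n j then
      ⨆ (x : X) (j : Fin s) (_ : n j ≠ 0) (i : Fin (n j)),
        ∑ v : Tup X n,
          if v j i = x then
            ENNReal.ofReal (norm (a (toLists v)) * wt G κ (toLists v))
          else 0
    else 0

/-- `A` is an `s`-field map kernel: it vanishes on the empty tuple. -/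
def IsKernel {s : ℕ} (A : X → (Fin s → List X) → ℂ) : Prop :=
  ∀ x, A x (fun _ => []) = 0

/-- The `L` part of the field map kernel norm. -/
def kerL [Fintype X] [DecidableEq X] (G : Finset X → ℝ) {s : ℕ} (κ : Fin s → ℝ)
    (A : X → (Fin s → List X) → ℂ) (n : Fin s → ℕ) : ℝ≥0∞ :=
  ⨆ x : X, ∑ v : Tup X n,
    ENNReal.ofReal (norm (A x (toLists v)) * (∏ j, κ j ^ n j)
      * G (insert x (supp (toLists v))))

/-- The `R` part of the field map kernel norm. -/
def kerR [Fintype X] [DecidableEq X] (G : Finset X → ℝ) {s : ℕ} (κ : Fin s → ℝ)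
    (A : X → (Fin s → List X) → ℂ) (n : Fin s → ℕ) : ℝ≥0∞ :=
  ⨆ (x' : X) (j : Fin s) (_ : n j ≠ 0) (i : Fin (n j)),
    ∑ x : X, ∑ v : Tup X n,
      if v j i = x' then
        ENNReal.ofReal (norm (A x (toLists v)) * (∏ j', κ j' ^ n j')
          * G (insert x (supp (toLists v))))
      else 0

/-- The norm `⦀A⦀_w` of an `s`-field map kernel. -/
def kerNorm [Fintype X] [DecidableEq X] (G : Finset X → ℝ) {s : ℕ} (κ : Fin s → ℝ)
    (A : X → (Fin s → List X) → ℂ) : ℝ≥0∞ :=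
  ∑' n : Fin s → ℕ, if 1 ≤ ∑ j, n j then max (kerL G κ A n) (kerR G κ A n) else 0

/-- The field obtained by applying the field map with kernel `A` to the fields `α`. -/
def fmApply [Fintype X] {s : ℕ} (A : X → (Fin s → List X) → ℂ)
    (α : Fin s → X → ℂ) (x : X) : ℂ :=
  ∑' p : Σ n : Fin s → ℕ, Tup X n, A x (toLists p.2) * ∏ j, ∏ i, α j (p.2 j i)

/-- The value of the analytic function with coefficient system `a` at the fields `α`. -/
def fnApply [Fintype X] {s : ℕ} (a : (Fin s → List X) → ℂ)
    (α : Fin s → X → ℂ) : ℂ :=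
  ∑' p : Σ n : Fin s → ℕ, Tup X n, a (toLists p.2) * ∏ j, ∏ i, α j (p.2 j i)

/-- The `L^p` norm (for `0 < p ≤ ∞`) of a field on the finite set `X`. -/
def lpNorm [Fintype X] (p : ℝ≥0∞) (α : X → ℂ) : ℝ :=
  if p = ∞ then ⨆ x, norm (α x)
  else (∑ x, norm (α x) ^ p.toReal) ^ (1 / p.toReal)

/-- Symmetrization of a coefficient system. -/
def symmetrize {s : ℕ} (a : (Fin s → List X) → ℂ) : (Fin s → List X) → ℂ :=
  fun l =>
    (((∏ j, Nat.factorial (l j).length : ℕ) : ℂ))⁻¹ *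
      ∑ e : (j : Fin s) → Equiv.Perm (Fin (l j).length),
        a fun j => List.ofFn fun i => (l j).get (e j i)

/-- Ordered concatenation of the pieces `q (j,k)`, in lexicographic order of `(j,k)`. -/
def concatPieces {r : ℕ} (m : Fin r → ℕ) (q : (Σ j : Fin r, Fin (m j)) → List X) : List X :=
  ((List.finRange r).map fun j => (List.ofFn fun k : Fin (m j) => q ⟨j, k⟩).flatten).flatten

/-- The coefficient system obtained by formally substituting the field map kernels `A j`
into the coefficient system `a` of a function of `r` fields. -/
def substCoef [Fintype X] {r s : ℕ} (a : (Fin r → List X) → ℂ)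
    (A : Fin r → X → (Fin s → List X) → ℂ) : (Fin s → List X) → ℂ :=
  fun l =>
    ∑' m : Fin r → ℕ,
      ∑ y : Tup X m,
        a (toLists y) *
          ∑' q : (i : Fin s) → (Σ j : Fin r, Fin (m j)) → List X,
            if ∀ i, concatPieces m (q i) = l i then
              ∏ j, ∏ k, A j (y j k) (fun i => q i ⟨j, k⟩)
            else 0

/-- The kernel obtained by formally substituting the field map kernels `A j`
into the `r`-field map kernel `B`. -/
def substKer [Fintype X] {r s : ℕ} (B : X → (Fin r → List X) → ℂ)
    (A : Fin r → X → (Fin s → List X) → ℂ) : X → (Fin s → List X) → ℂ :=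
  fun x l => substCoef (B x) A l

/-- Total length of the last `r` list arguments of an `(s+r)`-field map kernel argument. -/
def lastLen {X : Type*} {s r : ℕ} (l : Fin (s + r) → List X) : ℕ :=
  ∑ j : Fin r, (l (Fin.natAdd s j)).length

/-- `B` has minimum degree at least `d` in its last `r` arguments. -/
def MinDeg {s r : ℕ} (B : X → (Fin (s + r) → List X) → ℂ) (d : ℕ) : Prop :=
  ∀ x l, lastLen (s := s) (r := r) l < d → B x l = 0

/-- `B` has maximum degree at most `d` in its last `r` arguments. -/
def MaxDeg {s r : ℕ} (B : X → (Fin (s + r) → List X) → ℂ) (d : ℕ) : Prop :=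
  ∀ x l, d < lastLen (s := s) (r := r) l → B x l = 0

/-- The restriction `B_{n_{s+1},…,n_{s+r}}`. -/
def restrictDeg {s r : ℕ} (B : X → (Fin (s + r) → List X) → ℂ) (n : Fin r → ℕ) :
    X → (Fin (s + r) → List X) → ℂ :=
  fun x l => if ∀ j, (l (Fin.natAdd s j)).length = n j then B x l else 0

/-- The primed norm `⦀B⦀'_{w_{κ,λ}}`. -/
def kerNorm' [Fintype X] [DecidableEq X] (G : Finset X → ℝ) {s r : ℕ}
    (kl : Fin (s + r) → ℝ) (B : X → (Fin (s + r) → List X) → ℂ) : ℝ≥0∞ :=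
  ∑' n : Fin r → ℕ, (∑ j, n j : ℕ) * kerNorm G kl (restrictDeg B n)

/-- The norm of an `r`-tuple of `s`-field maps, as element of the Banach space `𝓑`. -/
def tupleNorm [Fintype X] [DecidableEq X] (G : Finset X → ℝ) {s r : ℕ}
    (κ : Fin s → ℝ) (lam : Fin r → ℝ)
    (Γ : Fin r → X → (Fin s → List X) → ℂ) : ℝ≥0∞ :=
  ⨆ j, kerNorm G κ (Γ j) / ENNReal.ofReal (lam j)

/-- The kernel of the coordinate field map `(α₁,…,α_s) ↦ α_i`. -/
def projKer [DecidableEq X] {s : ℕ} (i : Fin s) : X → (Fin s → List X) → ℂ :=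
  fun x l => if l = Function.update (fun _ => ([] : List X)) i [x] then 1 else 0

/-- The family of maps substituted into an `(s+r)`-field map when composing with
an `r`-tuple `Γ` of `s`-field maps: the first `s` arguments are left alone. -/
def extendMaps [DecidableEq X] {s r : ℕ}
    (Γ : Fin r → X → (Fin s → List X) → ℂ) :
    Fin (s + r) → X → (Fin s → List X) → ℂ :=
  Fin.addCases (fun i => projKer i) Γ

/-- The kernel of the `s`-field map `B̃(Γ⃗)(α⃗) = B(α⃗, Γ⃗(α⃗))`. -/
def tildeKer [Fintype X] [DecidableEq X] {s r : ℕ}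
    (B : X → (Fin (s + r) → List X) → ℂ)
    (Γ : Fin r → X → (Fin s → List X) → ℂ) : X → (Fin s → List X) → ℂ :=
  substKer B (extendMaps Γ)

end

/-- The `G`-weighted `ℓ¹`–`ℓ^∞` norm of a linear operator on `ℂ^X`. -/
noncomputable def opNormG {X : Type*} [Fintype X] [DecidableEq X] (G : Finset X → ℝ)
    (S : Matrix X X ℂ) : ℝ :=
  max (⨆ y, ∑ x, norm (S x y) * G {x, y})
    (⨆ x, ∑ y, norm (S x y) * G {x, y})

/-- The `G`-weighted norm of a three-point interaction `W`. -/
noncomputable def wNormG {X : Type*} [Fintype X] [DecidableEq X] (G : Finset X → ℝ)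
    (W : X → X → X → ℂ) : ℝ :=
  max (⨆ x, ∑ y, ∑ z, norm (W x y z) * G {x, y, z})
    (max (⨆ y, ∑ x, ∑ z, norm (W x y z) * G {x, y, z})
      (⨆ z, ∑ x, ∑ y, norm (W x y z) * G {x, y, z}))

/-- `𝒲(φ₁,φ₂)(x) = Σ_{y,z} W(x,y,z) φ₁(y) φ₂(z)`. -/
noncomputable def Wapp {X : Type*} [Fintype X] (W : X → X → X → ℂ)
    (φ₁ φ₂ : X → ℂ) (x : X) : ℂ :=
  ∑ y, ∑ z, W x y z * φ₁ y * φ₂ z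

/-! Write `ψⱼ = Sⱼ⁻¹ φⱼ`; the field equations give `ψⱼ - ψⱼ' = 𝒲ⱼ(φ') - 𝒲ⱼ(φ)`. Since `G ≥ 1`,
`‖Sⱼ‖_G` and `‖Wⱼ‖_G` dominate the plain row sums, so in the sup norm on `X → ℂ` we get
`‖φⱼ‖ ≤ S̄ Kκ` and `‖φⱼ - φⱼ'‖ ≤ S̄ ‖ψⱼ - ψⱼ'‖`. Bilinearity of `𝒲ⱼ` then yields
`d ≤ 2 S̄² W̄ Kκ · d` for `d = ‖ψ₁ - ψ₁'‖ + ‖ψ₂ - ψ₂'‖`, and the smallness condition forces `d = 0`. -/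

open Finset Matrix

lemma Wapp_sub_Wapp {X : Type*} [Fintype X] (W : X → X → X → ℂ) (a b a' b' : X → ℂ) :
    Wapp W a b - Wapp W a' b' = Wapp W (a - a') b + Wapp W a' (b - b') := by
  funext x
  simp only [Wapp, Pi.sub_apply, Pi.add_apply, ← sum_sub_distrib, ← sum_add_distrib]
  exact sum_congr rfl fun _ _ => sum_congr rfl fun _ _ => by ring

section WeightedNorms

variable {X : Type*} [Fintype X] [DecidableEq X] {G : Finset X → ℝ}

lemma sum_norm_le_opNormG (hG : ∀ S, 1 ≤ G S) (S : Matrix X X ℂ) (x : X) :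
    ∑ y, ‖S x y‖ ≤ opNormG G S :=
  calc ∑ y, ‖S x y‖
      ≤ ∑ y, ‖S x y‖ * G {x, y} :=
        sum_le_sum fun _ _ => le_mul_of_one_le_right (norm_nonneg _) (hG _)
    _ ≤ ⨆ x, ∑ y, ‖S x y‖ * G {x, y} :=
        le_ciSup (f := fun x => ∑ y, ‖S x y‖ * G {x, y}) (Finite.bddAbove_range _) x
    _ ≤ opNormG G S := le_max_right _ _

lemma sum_sum_norm_le_wNormG (hG : ∀ S, 1 ≤ G S) (W : X → X → X → ℂ) (x : X) :
    ∑ y, ∑ z, ‖W x y z‖ ≤ wNormG G W :=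
  calc ∑ y, ∑ z, ‖W x y z‖
      ≤ ∑ y, ∑ z, ‖W x y z‖ * G {x, y, z} :=
        sum_le_sum fun _ _ => sum_le_sum fun _ _ =>
          le_mul_of_one_le_right (norm_nonneg _) (hG _)
    _ ≤ ⨆ x, ∑ y, ∑ z, ‖W x y z‖ * G {x, y, z} :=
        le_ciSup (f := fun x => ∑ y, ∑ z, ‖W x y z‖ * G {x, y, z}) (Finite.bddAbove_range _) x
    _ ≤ wNormG G W := le_max_left _ _

lemma opNormG_nonneg (hG : ∀ S, 1 ≤ G S) (S : Matrix X X ℂ) : 0 ≤ opNormG G S :=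
  le_max_of_le_left <| Real.iSup_nonneg fun _ => sum_nonneg fun _ _ =>
    mul_nonneg (norm_nonneg _) (zero_le_one.trans (hG _))

lemma wNormG_nonneg (hG : ∀ S, 1 ≤ G S) (W : X → X → X → ℂ) : 0 ≤ wNormG G W :=
  le_max_of_le_left <| Real.iSup_nonneg fun _ => sum_nonneg fun _ _ => sum_nonneg fun _ _ =>
    mul_nonneg (norm_nonneg _) (zero_le_one.trans (hG _))

lemma norm_mulVec_le_opNormG (hG : ∀ S, 1 ≤ G S) (S : Matrix X X ℂ) (v : X → ℂ) :
    ‖S *ᵥ v‖ ≤ opNormG G S * ‖v‖ := by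
  refine (pi_norm_le_iff_of_nonneg (mul_nonneg (opNormG_nonneg hG S) (norm_nonneg v))).2
    fun x => ?_
  calc ‖∑ y, S x y * v y‖
      ≤ ∑ y, ‖S x y‖ * ‖v‖ := (norm_sum_le _ _).trans <| sum_le_sum fun y _ => by
        rw [norm_mul]; exact mul_le_mul_of_nonneg_left (norm_le_pi_norm v y) (norm_nonneg _)
    _ = (∑ y, ‖S x y‖) * ‖v‖ := (sum_mul _ _ _).symm
    _ ≤ opNormG G S * ‖v‖ :=
        mul_le_mul_of_nonneg_right (sum_norm_le_opNormG hG S x) (norm_nonneg v)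

lemma norm_le_mul_norm_inv_mulVec (hG : ∀ S, 1 ≤ G S) {S : Matrix X X ℂ} (hS : IsUnit S)
    {s : ℝ} (hs : opNormG G S ≤ s) (φ : X → ℂ) : ‖φ‖ ≤ s * ‖S⁻¹ *ᵥ φ‖ := by
  have hφ : S *ᵥ (S⁻¹ *ᵥ φ) = φ := by
    rw [mulVec_mulVec, mul_nonsing_inv _ ((isUnit_iff_isUnit_det S).1 hS), one_mulVec]
  calc ‖φ‖ = ‖S *ᵥ (S⁻¹ *ᵥ φ)‖ := by rw [hφ]
    _ ≤ opNormG G S * ‖S⁻¹ *ᵥ φ‖ := norm_mulVec_le_opNormG hG S (S⁻¹ *ᵥ φ)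
    _ ≤ s * ‖S⁻¹ *ᵥ φ‖ := by gcongr

lemma norm_Wapp_le (hG : ∀ S, 1 ≤ G S) (W : X → X → X → ℂ) (a b : X → ℂ) :
    ‖Wapp W a b‖ ≤ wNormG G W * (‖a‖ * ‖b‖) := by
  refine (pi_norm_le_iff_of_nonneg (by have := wNormG_nonneg hG W; positivity)).2 fun x => ?_
  calc ‖∑ y, ∑ z, W x y z * a y * b z‖
      ≤ ∑ y, ∑ z, ‖W x y z‖ * (‖a‖ * ‖b‖) :=
        (norm_sum_le _ _).trans <| sum_le_sum fun y _ => (norm_sum_le _ _).trans <|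
          sum_le_sum fun z _ => by
            rw [norm_mul, norm_mul, mul_assoc]
            exact mul_le_mul_of_nonneg_left
              (mul_le_mul (norm_le_pi_norm a y) (norm_le_pi_norm b z) (norm_nonneg _)
                (norm_nonneg _)) (norm_nonneg _)
    _ = (∑ y, ∑ z, ‖W x y z‖) * (‖a‖ * ‖b‖) := by simp only [sum_mul]
    _ ≤ wNormG G W * (‖a‖ * ‖b‖) :=
        mul_le_mul_of_nonneg_right (sum_sum_norm_le_wNormG hG W x) (by positivity)

lemma norm_inv_mulVec_sub_le (hG : ∀ S, 1 ≤ G S) {W : X → X → X → ℂ} {w : ℝ}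
    (hw : wNormG G W ≤ w) {S : Matrix X X ℂ} {α φ φ' φ₁ φ₂ φ₁' φ₂' : X → ℂ}
    (h : ∀ x, (S⁻¹).mulVec φ x + Wapp W φ₁ φ₂ x = α x)
    (h' : ∀ x, (S⁻¹).mulVec φ' x + Wapp W φ₁' φ₂' x = α x) :
    ‖S⁻¹ *ᵥ φ - S⁻¹ *ᵥ φ'‖ ≤ w * (‖φ₁ - φ₁'‖ * ‖φ₂‖ + ‖φ₁'‖ * ‖φ₂ - φ₂'‖) := by
  have hdiff : S⁻¹ *ᵥ φ - S⁻¹ *ᵥ φ' = Wapp W φ₁' φ₂' - Wapp W φ₁ φ₂ :=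
    funext fun x => by simp only [Pi.sub_apply]; linear_combination h x - h' x
  rw [hdiff, norm_sub_rev, Wapp_sub_Wapp]
  calc _ ≤ wNormG G W * (‖φ₁ - φ₁'‖ * ‖φ₂‖) + wNormG G W * (‖φ₁'‖ * ‖φ₂ - φ₂'‖) :=
        (norm_add_le _ _).trans (add_le_add (norm_Wapp_le hG _ _ _) (norm_Wapp_le hG _ _ _))
    _ ≤ w * (‖φ₁ - φ₁'‖ * ‖φ₂‖ + ‖φ₁'‖ * ‖φ₂ - φ₂'‖) := by
        rw [mul_add]; gcongr

end WeightedNorms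

theorem statement15_general {X : Type*} [Fintype X] [DecidableEq X]
    (G : Finset X → ℝ)
    (hG1 : ∀ S : Finset X, 1 ≤ G S)
    (S₁ S₂ : Matrix X X ℂ) (hS₁ : IsUnit S₁) (hS₂ : IsUnit S₂)
    (W₁ W₂ : X → X → X → ℂ)
    (κ K : ℝ) (hκ : 0 < κ) (hK : 0 < K)
    (hsmall : (max (opNormG G S₁) (opNormG G S₂)) ^ 2
        * max (wNormG G W₁) (wNormG G W₂) * κ < 1 / (2 * K))
    (α₁ α₂ φ₁ φ₂ φ₁' φ₂' : X → ℂ)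
    (heq₁ : ∀ x, (S₁⁻¹).mulVec φ₁ x + Wapp W₁ φ₁ φ₂ x = α₁ x)
    (heq₂ : ∀ x, (S₂⁻¹).mulVec φ₂ x + Wapp W₂ φ₁ φ₂ x = α₂ x)
    (heq₁' : ∀ x, (S₁⁻¹).mulVec φ₁' x + Wapp W₁ φ₁' φ₂' x = α₁ x)
    (heq₂' : ∀ x, (S₂⁻¹).mulVec φ₂' x + Wapp W₂ φ₁' φ₂' x = α₂ x)
    (hb₂ : ∀ x, norm ((S₂⁻¹).mulVec φ₂ x) ≤ K * κ)
    (hb₁' : ∀ x, norm ((S₁⁻¹).mulVec φ₁' x) ≤ K * κ) :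
    φ₁ = φ₁' ∧ φ₂ = φ₂' := by
  set s := max (opNormG G S₁) (opNormG G S₂)
  set w := max (wNormG G W₁) (wNormG G W₂)
  set d₁ := ‖S₁⁻¹ *ᵥ φ₁ - S₁⁻¹ *ᵥ φ₁'‖
  set d₂ := ‖S₂⁻¹ *ᵥ φ₂ - S₂⁻¹ *ᵥ φ₂'‖
  have hr : 0 ≤ K * κ := by positivity
  have hs : 0 ≤ s := (opNormG_nonneg hG1 S₁).trans (le_max_left _ _)
  have hw : 0 ≤ w := (wNormG_nonneg hG1 W₁).trans (le_max_left _ _)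
  have hnorm₁ := norm_le_mul_norm_inv_mulVec hG1 hS₁ (le_max_left _ (opNormG G S₂))
  have hnorm₂ := norm_le_mul_norm_inv_mulVec hG1 hS₂ (le_max_right (opNormG G S₁) _)
  have hd₁ : ‖φ₁ - φ₁'‖ ≤ s * d₁ := by simpa only [mulVec_sub] using hnorm₁ (φ₁ - φ₁')
  have hd₂ : ‖φ₂ - φ₂'‖ ≤ s * d₂ := by simpa only [mulVec_sub] using hnorm₂ (φ₂ - φ₂')
  have hφ₁' : ‖φ₁'‖ ≤ s * (K * κ) :=
    (hnorm₁ φ₁').trans (by gcongr; exact (pi_norm_le_iff_of_nonneg hr).2 hb₁')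
  have hφ₂ : ‖φ₂‖ ≤ s * (K * κ) :=
    (hnorm₂ φ₂).trans (by gcongr; exact (pi_norm_le_iff_of_nonneg hr).2 hb₂)
  have hW₁ := norm_inv_mulVec_sub_le hG1 (le_max_left _ (wNormG G W₂)) heq₁ heq₁'
  have hW₂ := norm_inv_mulVec_sub_le hG1 (le_max_right (wNormG G W₁) _) heq₂ heq₂'
  have hq : 2 * s ^ 2 * w * (K * κ) < 1 := by
    linarith [(lt_div_iff₀ (by positivity)).1 hsmall]
  have hcontr : d₁ + d₂ ≤ 2 * s ^ 2 * w * (K * κ) * (d₁ + d₂) :=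
    calc d₁ + d₂ ≤ 2 * w * (‖φ₁ - φ₁'‖ * ‖φ₂‖ + ‖φ₁'‖ * ‖φ₂ - φ₂'‖) := by linarith
      _ ≤ 2 * w * (s * d₁ * (s * (K * κ)) + s * (K * κ) * (s * d₂)) := by gcongr
      _ = 2 * s ^ 2 * w * (K * κ) * (d₁ + d₂) := by ring
  have hd : 0 ≤ d₁ + d₂ := by positivity
  obtain ⟨h₁, h₂⟩ : d₁ = 0 ∧ d₂ = 0 :=
    (add_eq_zero_iff_of_nonneg (norm_nonneg _) (norm_nonneg _)).1 (by nlinarith)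
  rw [h₁, mul_zero, norm_le_zero_iff, sub_eq_zero] at hd₁
  rw [h₂, mul_zero, norm_le_zero_iff, sub_eq_zero] at hd₂
  exact ⟨hd₁, hd₂⟩

/-- Corollary III.17 (uniqueness): solutions of the background field equations are
unique among pairs `(φ₁,φ₂)` with `max_x |(S_j⁻¹φ_j)(x)| ≤ Kκ`. -/
theorem statement15 {X : Type*} [Fintype X] [DecidableEq X] [Nonempty X]
    (G : Finset X → ℝ)
    (hG1 : ∀ S : Finset X, 1 ≤ G S)
    (hGsing : ∀ S : Finset X, S.card ≤ 1 → G S = 1)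
    (hGmono : ∀ S T : Finset X, S ⊆ T → G S ≤ G T)
    (hGmul : ∀ S T : Finset X, (S ∩ T).Nonempty → G (S ∪ T) ≤ G S * G T)
    (S₁ S₂ : Matrix X X ℂ) (hS₁ : IsUnit S₁) (hS₂ : IsUnit S₂)
    (W₁ W₂ : X → X → X → ℂ)
    (κ K : ℝ) (hκ : 0 < κ) (hK : 0 < K)
    (hsmall : (max (opNormG G S₁) (opNormG G S₂)) ^ 2
        * max (wNormG G W₁) (wNormG G W₂) * κ < 1 / (2 * K))
    (α₁ α₂ φ₁ φ₂ φ₁' φ₂' : X → ℂ)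
    (heq₁ : ∀ x, (S₁⁻¹).mulVec φ₁ x + Wapp W₁ φ₁ φ₂ x = α₁ x)
    (heq₂ : ∀ x, (S₂⁻¹).mulVec φ₂ x + Wapp W₂ φ₁ φ₂ x = α₂ x)
    (heq₁' : ∀ x, (S₁⁻¹).mulVec φ₁' x + Wapp W₁ φ₁' φ₂' x = α₁ x)
    (heq₂' : ∀ x, (S₂⁻¹).mulVec φ₂' x + Wapp W₂ φ₁' φ₂' x = α₂ x)
    (hb₁ : ∀ x, norm ((S₁⁻¹).mulVec φ₁ x) ≤ K * κ)
    (hb₂ : ∀ x, norm ((S₂⁻¹).mulVec φ₂ x) ≤ K * κ)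
    (hb₁' : ∀ x, norm ((S₁⁻¹).mulVec φ₁' x) ≤ K * κ)
    (hb₂' : ∀ x, norm ((S₂⁻¹).mulVec φ₂' x) ≤ K * κ) :
    φ₁ = φ₁' ∧ φ₂ = φ₂' :=
  statement15_general G hG1 S₁ S₂ hS₁ hS₂ W₁ W₂ κ K hκ hK hsmall α₁ α₂ φ₁ φ₂ φ₁' φ₂' heq₁ heq₂ heq₁'
    heq₂' hb₂ hb₁'

end BFKT
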